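/- Let p = (p_0, p_1, p_3) be a probability vector with positive entries and ψ(i) = Σ_{η ∈ I_i} p_η where p_η = Π_k p_{η_k} and I_i = {η ∈ A^{|i|} : Π(η) = Π(i)}. For the word 1^{w-1}0 (w−1 ones followed by 0), ψ(1^{w-1}0) = (p_0/p_1) · p_1^w · Σ_{ℓ=0}^{w-1} (p_3/p_1)^ℓ, and ψ(1^w) = p_1^w. -/

import Mathlib

/-- The alphabet `A = {0, 1, 3}`. -/
def A : Set ℕ := {0, 1, 3}

/-- The natural projection `Π(i) = Σ_{k=1}^n i_k 3^{-(k-1)}`. -/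
noncomputable def proj : List ℕ → ℝ
  | [] => 0
  | a :: t => (a : ℝ) + proj t / 3

/-- The digit probabilities: `0 ↦ p₀`, `1 ↦ p₁`, `3 ↦ p₃`. -/
noncomputable def dig (p₀ p₁ p₃ : ℝ) : ℕ → ℝ :=
  fun k => if k = 0 then p₀ else if k = 1 then p₁ else p₃

/-- `ψ(i) = Σ_{η ∈ I_i} p_η`, where `p_η = Π_k p_{η_k}` and
`I_i = {η ∈ A^{|i|} : Π(η) = Π(i)}`. -/
noncomputable def psi (d : ℕ → ℝ) (i : List ℕ) : ℝ :=
  ∑' η : {η : List ℕ // η.length = i.length ∧ (∀ x ∈ η, x ∈ A) ∧ proj η = proj i},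
    ((η : List ℕ).map d).prod

def val : List ℕ → ℕ
  | [] => 0
  | a :: t => a * 3 ^ t.length + val t

lemma proj_val (l : List ℕ) : (3:ℝ) ^ l.length * proj l = 3 * (val l : ℝ) := by
  induction l with
  | nil => simp [proj, val]
  | cons a t ih =>
    have h : (3:ℝ) ^ (a :: t).length * proj (a :: t)
        = (a:ℝ) * 3 ^ (t.length+1) + 3 ^ t.length * proj t := by
      simp [proj, List.length_cons]; ring
    rw [h, ih]
    simp [val]; push_cast; ring

lemma proj_eq_iff {l m : List ℕ} (h : l.length = m.length) :
    proj l = proj m ↔ val l = val m := by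
  constructor
  · intro hp
    have := proj_val l
    rw [h, hp, proj_val m] at this
    have h3 : (3:ℝ) ≠ 0 := by norm_num
    exact_mod_cast (mul_left_cancel₀ h3 this).symm
  · intro hv
    have h1 := proj_val l
    have h2 := proj_val m
    rw [h, hv] at h1
    have hpow : (0:ℝ) < 3 ^ m.length := by positivity
    exact mul_left_cancel₀ (ne_of_gt hpow) (h1.trans h2.symm)

lemma memA {x : ℕ} (h : x ∈ A) : x = 0 ∨ x = 1 ∨ x = 3 := by
  simpa [A] using h

lemma val_le (l : List ℕ) (h : ∀ x ∈ l, x ∈ A) :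
    2 * val l + 3 ≤ 3 ^ (l.length + 1) := by
  induction l with
  | nil => simp [val]
  | cons a t ih =>
    have ht := ih (fun x hx => h x (List.mem_cons_of_mem _ hx))
    have ha : a ≤ 3 := by rcases memA (h a (List.mem_cons_self)) with h|h|h <;> omega
    simp only [val, List.length_cons]
    have : (3:ℕ) ^ (t.length + 1 + 1) = 3 * 3 ^ (t.length + 1) := by ring
    have h2 : (3:ℕ)^(t.length+1) = 3 * 3^t.length := by ring
    nlinarith [pow_pos (by norm_num : (0:ℕ) < 3) t.length]

lemma val_eq_max (l : List ℕ) (h : ∀ x ∈ l, x ∈ A)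
    (he : 2 * val l + 3 = 3 ^ (l.length + 1)) : l = List.replicate l.length 3 := by
  induction l with
  | nil => simp
  | cons a t ih =>
    have ht := val_le t (fun x hx => h x (List.mem_cons_of_mem _ hx))
    have ha := memA (h a (List.mem_cons_self))
    simp only [val, List.length_cons] at he ⊢
    have h2 : (3:ℕ)^(t.length+1+1) = 9 * 3^t.length := by ring
    have h3 : (3:ℕ)^(t.length+1) = 3 * 3^t.length := by ring
    rcases ha with rfl|rfl|rfl
    · omega
    · omega
    · have het : 2 * val t + 3 = 3 ^ (t.length + 1) := by omega
      have := ih (fun x hx => h x (List.mem_cons_of_mem _ hx)) het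
      rw [List.replicate_succ, ← this]

lemma fiber1 (l : List ℕ) (h : ∀ x ∈ l, x ∈ A)
    (he : 2 * val l + 1 = 3 ^ l.length) : l = List.replicate l.length 1 := by
  induction l with
  | nil => simp
  | cons a t ih =>
    have ht := val_le t (fun x hx => h x (List.mem_cons_of_mem _ hx))
    have ha := memA (h a (List.mem_cons_self))
    simp only [val, List.length_cons] at he ⊢
    have h3 : (3:ℕ)^(t.length+1) = 3 * 3^t.length := by ring
    rcases ha with rfl|rfl|rfl
    · omega
    · have het : 2 * val t + 1 = 3 ^ t.length := by omega
      have := ih (fun x hx => h x (List.mem_cons_of_mem _ hx)) het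
      rw [List.replicate_succ, ← this]
    · omega

lemma fiber0 (l : List ℕ) (h : ∀ x ∈ l, x ∈ A) (hl : 1 ≤ l.length)
    (he : 2 * val l + 3 = 3 ^ l.length) :
    ∃ ℓ < l.length, l = List.replicate ℓ 1 ++ 0 :: List.replicate (l.length - 1 - ℓ) 3 := by
  induction l with
  | nil => simp at hl
  | cons a t ih =>
    have ht := val_le t (fun x hx => h x (List.mem_cons_of_mem _ hx))
    have ha := memA (h a (List.mem_cons_self))
    simp only [val, List.length_cons] at he ⊢
    have h3 : (3:ℕ)^(t.length+1) = 3 * 3^t.length := by ring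
    rcases ha with rfl|rfl|rfl
    · -- a = 0 : tail is all 3s
      have het : 2 * val t + 3 = 3 ^ (t.length + 1) := by omega
      have := val_eq_max t (fun x hx => h x (List.mem_cons_of_mem _ hx)) het
      exact ⟨0, by omega, by simpa using this⟩
    · -- a = 1
      have hlen : 1 ≤ t.length := by
        by_contra hc
        have : t.length = 0 := by omega
        rw [this, pow_zero] at he
        norm_num at he
      have het : 2 * val t + 3 = 3 ^ t.length := by omega
      obtain ⟨ℓ, hℓ, heq⟩ := ih (fun x hx => h x (List.mem_cons_of_mem _ hx)) hlen het
      refine ⟨ℓ + 1, by omega, ?_⟩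
      have hn : t.length + 1 - 1 - (ℓ + 1) = t.length - 1 - ℓ := by omega
      rw [List.replicate_succ, List.cons_append, hn, ← heq]
    · omega

lemma val_append (l m : List ℕ) : val (l ++ m) = val l * 3 ^ m.length + val m := by
  induction l with
  | nil => simp [val]
  | cons a t ih =>
    show a * 3 ^ (t ++ m).length + val (t ++ m) = _
    rw [ih, List.length_append]
    simp [val]; ring

lemma val_rep1 (n : ℕ) : 2 * val (List.replicate n 1) + 1 = 3 ^ n := by
  induction n with
  | zero => simp [val]
  | succ k ih =>
    rw [List.replicate_succ]
    simp only [val, List.length_replicate]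
    have : (3:ℕ)^(k+1) = 3 * 3^k := by ring
    omega

lemma val_rep3 (n : ℕ) : 2 * val (List.replicate n 3) + 3 = 3 ^ (n + 1) := by
  induction n with
  | zero => simp [val]
  | succ k ih =>
    rw [List.replicate_succ]
    simp only [val, List.length_replicate]
    have : (3:ℕ)^(k+1+1) = 3 * 3^(k+1) := by ring
    have h2 : (3:ℕ)^(k+1) = 3 * 3^k := by ring
    omega

def word (w ℓ : ℕ) : List ℕ :=
  List.replicate ℓ 1 ++ 0 :: List.replicate (w - 1 - ℓ) 3

lemma word_len (w ℓ : ℕ) (h : ℓ < w) : (word w ℓ).length = w := by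
  simp only [word, List.length_append, List.length_cons, List.length_replicate]
  omega

lemma word_val (w ℓ : ℕ) (h : ℓ < w) : 2 * val (word w ℓ) + 3 = 3 ^ w := by
  have h1 := val_rep1 ℓ
  have h2 := val_rep3 (w - 1 - ℓ)
  rw [word, val_append]
  simp only [val, List.length_cons, List.length_replicate, Nat.zero_mul, Nat.zero_add,
    zero_mul, zero_add]
  have hw : (3:ℕ)^w = 3^ℓ * 3^(w-1-ℓ+1) := by rw [← pow_add]; congr 1; omega
  rw [hw, ← h1, ← h2]
  ring

lemma word_count (w ℓ : ℕ) : (word w ℓ).count 1 = ℓ := by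
  simp [word, List.count_append, List.count_replicate, List.count_cons]

lemma word_digits (w ℓ : ℕ) : ∀ x ∈ word w ℓ, x ∈ A := by
  intro x hx
  simp only [word, List.mem_append, List.mem_cons, List.mem_replicate] at hx
  simp only [A, Set.mem_insert_iff, Set.mem_singleton_iff]
  tauto

theorem stmt_12 (p₀ p₁ p₃ : ℝ) (h₀ : 0 < p₀) (h₁ : 0 < p₁) (h₃ : 0 < p₃)
    (hsum : p₀ + p₁ + p₃ = 1) (w : ℕ) (hw : 1 ≤ w) :
    psi (dig p₀ p₁ p₃) (List.replicate (w - 1) 1 ++ [0]) =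
        (p₀ / p₁) * p₁ ^ w * ∑ ℓ ∈ Finset.range w, (p₃ / p₁) ^ ℓ ∧
    psi (dig p₀ p₁ p₃) (List.replicate w 1) = p₁ ^ w := by
  have hd0 : dig p₀ p₁ p₃ 0 = p₀ := by simp [dig]
  have hd1 : dig p₀ p₁ p₃ 1 = p₁ := by simp [dig]
  have hd3 : dig p₀ p₁ p₃ 3 = p₃ := by simp [dig]
  constructor
  · -- part 1
    set i₀ := List.replicate (w - 1) 1 ++ [0] with hi₀
    have hi₀len : i₀.length = w := by simp [hi₀]; omega
    have hi₀val : 2 * val i₀ + 3 = 3 ^ w := by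
      rw [hi₀, val_append]
      simp only [val, List.length_cons, List.length_nil, List.length_replicate,
        pow_one, zero_mul, zero_add, pow_zero, mul_one, add_zero]
      have h1 := val_rep1 (w - 1)
      have hpw : (3:ℕ)^w = 3 * 3^(w-1) := by
        rw [← pow_succ']; congr 1; omega
      omega
    let g : Fin w → {η : List ℕ // η.length = i₀.length ∧ (∀ x ∈ η, x ∈ A) ∧
        proj η = proj i₀} := fun ℓ =>
      ⟨word w ℓ, by rw [word_len w ℓ ℓ.isLt, hi₀len], word_digits _ _, by
        refine (proj_eq_iff (by rw [word_len w ℓ ℓ.isLt, hi₀len])).mpr ?_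
        have := word_val w ℓ ℓ.isLt
        omega⟩
    have gval : ∀ ℓ : Fin w, ((g ℓ : List ℕ)) = word w ℓ := fun _ => rfl
    have hinj : Function.Injective g := by
      intro a b hab
      have h' := congrArg (fun t : {η : List ℕ // η.length = i₀.length ∧
        (∀ x ∈ η, x ∈ A) ∧ proj η = proj i₀} => (t : List ℕ).count 1) hab
      simp only [gval, word_count] at h'
      exact Fin.ext h'
    have hsurj : Function.Surjective g := by
      rintro ⟨l, hlen, hdig, hproj⟩
      have hlw : l.length = w := by rw [hlen, hi₀len]
      have hval : val l = val i₀ := (proj_eq_iff hlen).mp hproj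
      have hval3 : 2 * val l + 3 = 3 ^ l.length := by rw [hlw]; omega
      obtain ⟨ℓ, hℓ, heq⟩ := fiber0 l hdig (by omega) hval3
      refine ⟨⟨ℓ, by omega⟩, ?_⟩
      apply Subtype.ext
      show word w ℓ = l
      rw [hlw] at heq
      rw [heq]
      rfl
    have hbij : Function.Bijective g := ⟨hinj, hsurj⟩
    have key : psi (dig p₀ p₁ p₃) i₀
        = ∑ ℓ : Fin w, ((g ℓ : List ℕ).map (dig p₀ p₁ p₃)).prod := by
      rw [psi, ← (Equiv.ofBijective g hbij).tsum_eq, tsum_fintype]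
      rfl
    rw [key]
    have hterm : ∀ ℓ : Fin w,
        ((g ℓ : List ℕ).map (dig p₀ p₁ p₃)).prod
          = p₁ ^ (ℓ:ℕ) * (p₀ * p₃ ^ (w - 1 - ℓ)) := by
      intro ℓ
      rw [gval]
      simp only [word, List.map_append, List.map_cons, List.map_replicate,
        List.prod_append, List.prod_cons, List.prod_replicate, hd0, hd1, hd3]
    simp only [hterm]
    rw [Fin.sum_univ_eq_sum_range (fun ℓ => p₁ ^ ℓ * (p₀ * p₃ ^ (w - 1 - ℓ)))]
    rw [Finset.mul_sum, ← Finset.sum_range_reflect]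
    refine Finset.sum_congr rfl ?_
    intro j hj
    have hjw : j < w := Finset.mem_range.mp hj
    have h1' : w - 1 - (w - 1 - j) = j := by omega
    rw [h1']
    have hsplit : w = (j + 1) + (w - 1 - j) := by omega
    rw [show p₁ ^ w = p₁ ^ ((j+1) + (w-1-j)) by rw [← hsplit]]
    rw [pow_add, div_pow]
    field_simp
    ring
  · -- part 2
    have hbd : ∀ x ∈ List.replicate w 1, x ∈ A := by
      intro x hx
      rw [List.eq_of_mem_replicate hx]
      simp [A]
    set b : {η : List ℕ // η.length = (List.replicate w 1).length ∧ (∀ x ∈ η, x ∈ A) ∧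
        proj η = proj (List.replicate w 1)} :=
      ⟨List.replicate w 1, rfl, hbd, rfl⟩ with hb
    rw [psi, tsum_eq_single b]
    · simp only [hb, List.map_replicate, List.prod_replicate, hd1]
    · rintro ⟨l, hlen, hdig, hproj⟩ hne
      exfalso
      apply hne
      apply Subtype.ext
      have hlw : l.length = w := by simpa using hlen
      have hval : val l = val (List.replicate w 1) := (proj_eq_iff hlen).mp hproj
      have h1' := val_rep1 w
      have hval1 : 2 * val l + 1 = 3 ^ l.length := by rw [hlw]; omega
      have h2' := fiber1 l hdig hval1
      rw [hlw] at h2'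
      exact h2'
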